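/- Let C ∈ GL⁺(U). A family {Λ_w : w ∈ Ω} of adjointable operators is a continuous *-g-frame for U if and only if it is a (C,C)-controlled continuous *-g-frame for U. Moreover, if {Λ_w} is a (C,C)-controlled continuous *-g-frame with bounds A₀, B₀ then it is a continuous *-g-frame with bounds A₀‖C‖⁻¹ and B₀‖C⁻¹‖, and conversely if it is a continuous *-g-frame with bounds A₀, B₀ then it is (C,C)-controlled with bounds A₀‖C⁻¹‖⁻¹ and B₀‖C‖. -/

import Mathlib

/-! After rescaling to `‖T‖ ≤ 1`, a symmetric operator `T` on a Hilbert C*-module satisfies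
`⟪T x, T x⟫ ≤ ⟪x, x⟫`: the sequence `c j = ⟪T^j x, T^j x⟫` is convex, since
`c (j+2) - 2 c (j+1) + c j = ⟪T^(j+2) x - T^j x, T^(j+2) x - T^j x⟫ ≥ 0` by symmetry, and it is
bounded by `‖x‖²`, so it is nonincreasing. Hence `‖C⁻¹‖⁻² ⟪x, x⟫ ≤ ⟪C x, C x⟫ ≤ ‖C‖² ⟪x, x⟫`
(with `C⁻¹` symmetric as well), and conjugating the frame inequalities by `A₀`, `B₀` moves the
bounds between `x` and `C x` in both directions. -/

open MeasureTheory
open scoped ComplexOrder RightActions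

noncomputable section

/-- The class `CStarModule` as it stood in the older Mathlib (right action of `Aᵐᵒᵖ`). -/
class CStarModuleOld (A E : Type*) [NonUnitalSemiring A] [StarRing A]
    [Module ℂ A] [AddCommGroup E] [Module ℂ E] [PartialOrder A] [SMul Aᵐᵒᵖ E] [Norm A] [Norm E]
    extends Inner A E where
  inner_add_right {x} {y} {z} : inner x (y + z) = inner x y + inner x z
  inner_self_nonneg {x} : 0 ≤ inner x x
  inner_self {x} : inner x x = 0 ↔ x = 0
  inner_op_smul_right {a : A} {x y : E} : inner x (y <• a) = inner x y * a
  inner_smul_right_complex {z : ℂ} {x} {y} : inner x (z • y) = z • inner x y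
  star_inner x y : star (inner x y) = inner y x
  norm_eq_sqrt_norm_inner_self x : ‖x‖ = √‖inner x x‖

open Filter Topology
open scoped InnerProductSpace

theorem nonpos_of_forall_nsmul_le {E : Type*} [AddCommGroup E] [PartialOrder E] [Module ℝ E]
    [PosSMulMono ℝ E] [TopologicalSpace E] [ContinuousSMul ℝ E] [ClosedIciTopology E]
    {a b : E} (h : ∀ n : ℕ, n • a ≤ b) : a ≤ 0 := by
  have hlim : Tendsto (fun n : ℕ => ((n : ℝ) + 1)⁻¹ • b) atTop (𝓝 0) := by
    simpa using (tendsto_inv_atTop_zero.comp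
      (tendsto_atTop_add_const_right _ (1 : ℝ) tendsto_natCast_atTop_atTop)).smul_const b
  refine ge_of_tendsto' hlim fun n => ?_
  have hn : (0 : ℝ) < n + 1 := by positivity
  calc a = ((n : ℝ) + 1)⁻¹ • (((n : ℝ) + 1) • a) := by rw [inv_smul_smul₀ hn.ne']
    _ = ((n : ℝ) + 1)⁻¹ • ((n + 1 : ℕ) • a) := by rw [← Nat.cast_smul_eq_nsmul ℝ]; push_cast; rfl
    _ ≤ ((n : ℝ) + 1)⁻¹ • b := smul_le_smul_of_nonneg_left (h _) (inv_nonneg.mpr hn.le)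

theorem antitone_of_monotone_sub_of_le {E : Type*} [AddCommGroup E] [PartialOrder E]
    [IsOrderedAddMonoid E] [Module ℝ E] [PosSMulMono ℝ E] [TopologicalSpace E]
    [ContinuousSMul ℝ E] [ClosedIciTopology E]
    {c : ℕ → E} {b : E} (hc : Monotone fun j => c (j + 1) - c j) (hb : ∀ n, c n ≤ b) :
    Antitone c := by
  refine antitone_nat_of_succ_le fun k => sub_nonpos.mp <|
    nonpos_of_forall_nsmul_le (b := b - c k) fun n => ?_
  calc n • (c (k + 1) - c k) = ∑ _j ∈ Finset.range n, (c (k + 1) - c k) := by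
        rw [Finset.sum_const, Finset.card_range]
    _ ≤ ∑ j ∈ Finset.range n, (c (k + j + 1) - c (k + j)) :=
        Finset.sum_le_sum fun j _ => hc (Nat.le_add_right k j)
    _ = c (k + n) - c k := Finset.sum_range_sub (fun j => c (k + j)) n
    _ ≤ b - c k := sub_le_sub_right (hb _) _

theorem smul_mul_mul_star_smul {A : Type*} [NonUnitalSemiring A] [StarRing A] [Module ℝ A]
    [StarModule ℝ A] [SMulCommClass ℝ A A] [IsScalarTower ℝ A A] (r : ℝ) (c a : A) :
    (r • c) * a * star (r • c) = c * (r ^ 2 • a) * star c := by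
  rw [star_smul, star_trivial, smul_mul_assoc, smul_mul_assoc, mul_smul_comm, mul_smul_comm,
    smul_smul, sq, smul_mul_assoc]

namespace CStarModuleOld

section Algebraic

variable {A E : Type*} [NonUnitalRing A] [StarRing A] [Module ℂ A] [PartialOrder A] [Norm A]
  [AddCommGroup E] [Module ℂ E] [SMul Aᵐᵒᵖ E] [Norm E] [CStarModuleOld A E]

@[simp] theorem inner_zero_right (x : E) : ⟪x, 0⟫_A = 0 := by
  simpa using (inner_add_right (A := A) (x := x) (y := (0 : E)) (z := 0)).symm

@[simp] theorem inner_zero_left (x : E) : ⟪0, x⟫_A = 0 := by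
  rw [← star_inner, inner_zero_right, star_zero]

theorem inner_sub_right (x y z : E) : ⟪x, y - z⟫_A = ⟪x, y⟫_A - ⟪x, z⟫_A := by
  rw [eq_sub_iff_add_eq, ← inner_add_right, sub_add_cancel]

theorem inner_sub_left (x y z : E) : ⟪x - y, z⟫_A = ⟪x, z⟫_A - ⟪y, z⟫_A := by
  rw [← star_inner, inner_sub_right, star_sub, star_inner, star_inner]

end Algebraic

variable {A : Type*} [CStarAlgebra A] [PartialOrder A]
  {U : Type*} [NormedAddCommGroup U] [NormedSpace ℂ U] [SMul Aᵐᵒᵖ U] [CStarModuleOld A U]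

theorem inner_real_smul_right (r : ℝ) (x y : U) : ⟪x, r • y⟫_A = r • ⟪x, y⟫_A := by
  simpa only [Complex.coe_smul] using
    inner_smul_right_complex (A := A) (z := (r : ℂ)) (x := x) (y := y)

theorem inner_real_smul_left (r : ℝ) (x y : U) : ⟪r • x, y⟫_A = r • ⟪x, y⟫_A := by
  rw [← star_inner, inner_real_smul_right, star_smul, star_trivial, star_inner]

variable (A) in
def IsSymmetric (T : U →L[ℂ] U) : Prop :=
  ∀ x y, ⟪T x, y⟫_A = ⟪x, T y⟫_A

theorem IsSymmetric.of_leftInverse {T S : U →L[ℂ] U} (hT : IsSymmetric A T)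
    (h : Function.LeftInverse T S) : IsSymmetric A S := fun x y => by
  rw [← h y, ← hT, h, h]

variable [StarOrderedRing A]

theorem inner_self_le_norm_sq_smul_one (x : U) : ⟪x, x⟫_A ≤ ‖x‖ ^ 2 • (1 : A) := by
  rw [norm_eq_sqrt_norm_inner_self (A := A) x, Real.sq_sqrt (norm_nonneg _),
    ← Algebra.algebraMap_eq_smul_one]
  exact IsSelfAdjoint.le_algebraMap_norm_self (star_inner x x)

theorem IsSymmetric.inner_map_self_le_of_norm_le_one {T : U →L[ℂ] U} (hT : IsSymmetric A T)
    (hT1 : ‖T‖ ≤ 1) (x : U) : ⟪T x, T x⟫_A ≤ ⟪x, x⟫_A := by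
  set c : ℕ → A := fun j => ⟪(T ^ j) x, (T ^ j) x⟫_A
  have hpow (j : ℕ) : (T ^ (j + 1)) x = T ((T ^ j) x) := by rw [pow_succ']; rfl
  have hconvex : Monotone fun j => c (j + 1) - c j := by
    refine monotone_nat_of_le_succ fun j => sub_nonneg.mp ?_
    have hmid : ⟪(T ^ (j + 2)) x, (T ^ j) x⟫_A = c (j + 1) := by rw [hpow (j + 1), hT, ← hpow j]
    have hmid' : ⟪(T ^ j) x, (T ^ (j + 2)) x⟫_A = c (j + 1) := by
      rw [hpow (j + 1), ← hT, ← hpow j]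
    calc 0 ≤ ⟪(T ^ (j + 2)) x - (T ^ j) x, (T ^ (j + 2)) x - (T ^ j) x⟫_A := inner_self_nonneg
      _ = _ := by rw [inner_sub_left, inner_sub_right, inner_sub_right, hmid, hmid']
  have hnorm (j : ℕ) : ‖(T ^ j) x‖ ≤ ‖x‖ := by
    induction j with
    | zero => simp
    | succ j ih => exact (hpow j ▸ T.le_of_opNorm_le hT1 _).trans (by simpa using ih)
  have hbdd (j : ℕ) : c j ≤ ‖x‖ ^ 2 • (1 : A) :=
    (inner_self_le_norm_sq_smul_one _).trans <| smul_le_smul_of_nonneg_right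
      (pow_le_pow_left₀ (norm_nonneg _) (hnorm j) 2) zero_le_one
  simpa [c] using antitone_of_monotone_sub_of_le hconvex hbdd (Nat.zero_le 1)

theorem IsSymmetric.inner_map_self_le_norm_sq_smul {T : U →L[ℂ] U} (hT : IsSymmetric A T)
    (x : U) : ⟪T x, T x⟫_A ≤ ‖T‖ ^ 2 • ⟪x, x⟫_A := by
  rcases eq_or_ne T 0 with rfl | hT0
  · simp
  have hn : 0 < ‖T‖ := norm_pos_iff.mpr hT0
  have hS : IsSymmetric A (‖T‖⁻¹ • T) := fun x y => by
    simp only [smul_apply, inner_real_smul_left, inner_real_smul_right, hT x y]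
  have hS1 : ‖‖T‖⁻¹ • T‖ ≤ 1 := by
    rw [norm_smul, norm_inv, norm_norm, inv_mul_cancel₀ hn.ne']
  have h := hS.inner_map_self_le_of_norm_le_one hS1 x
  simp only [smul_apply, inner_real_smul_left, inner_real_smul_right,
    smul_smul, ← sq] at h
  calc ⟪T x, T x⟫_A = ‖T‖ ^ 2 • ‖T‖⁻¹ ^ 2 • ⟪T x, T x⟫_A := by
        rw [smul_smul, ← mul_pow, mul_inv_cancel₀ hn.ne', one_pow, one_smul]
    _ ≤ ‖T‖ ^ 2 • ⟪x, x⟫_A := smul_le_smul_of_nonneg_left h (by positivity)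

theorem IsSymmetric.inv_norm_sq_smul_inner_map_self_le {S : U →L[ℂ] U} (hS : IsSymmetric A S)
    (y : U) : ‖S‖⁻¹ ^ 2 • ⟪S y, S y⟫_A ≤ ⟪y, y⟫_A := by
  rcases eq_or_ne ‖S‖ 0 with hS0 | hS0
  · simpa [hS0] using inner_self_nonneg
  calc ‖S‖⁻¹ ^ 2 • ⟪S y, S y⟫_A ≤ ‖S‖⁻¹ ^ 2 • ‖S‖ ^ 2 • ⟪y, y⟫_A :=
        smul_le_smul_of_nonneg_left (hS.inner_map_self_le_norm_sq_smul y) (by positivity)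
    _ = ⟪y, y⟫_A := by rw [smul_smul, ← mul_pow, inv_mul_cancel₀ hS0, one_pow, one_smul]

theorem IsSymmetric.smul_conjugate_inner_self_le {S T : U →L[ℂ] U} (hS : IsSymmetric A S) {x : U}
    (hST : S (T x) = x) (a : A) :
    (‖S‖⁻¹ • a) * ⟪x, x⟫_A * star (‖S‖⁻¹ • a) ≤ a * ⟪T x, T x⟫_A * star a := by
  rw [smul_mul_mul_star_smul]
  refine star_right_conjugate_le_conjugate ?_ a
  simpa only [hST] using hS.inv_norm_sq_smul_inner_map_self_le (T x)

theorem IsSymmetric.conjugate_inner_map_self_le {T : U →L[ℂ] U} (hT : IsSymmetric A T) (x : U)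
    (b : A) : b * ⟪T x, T x⟫_A * star b ≤ (‖T‖ • b) * ⟪x, x⟫_A * star (‖T‖ • b) := by
  rw [smul_mul_mul_star_smul]
  exact star_right_conjugate_le_conjugate (hT.inner_map_self_le_norm_sq_smul x) b

end CStarModuleOld

theorem stmt7_general {A : Type*} [CStarAlgebra A] [PartialOrder A] [StarOrderedRing A]
    {U : Type*} [NormedAddCommGroup U] [NormedSpace ℂ U] [SMul Aᵐᵒᵖ U] [CStarModuleOld A U]
    {Ω : Type*} [MeasurableSpace Ω] (μ : Measure Ω)
    {V : Ω → Type*} [∀ w, NormedAddCommGroup (V w)] [∀ w, NormedSpace ℂ (V w)]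
    [∀ w, SMul Aᵐᵒᵖ (V w)] [∀ w, CStarModuleOld A (V w)]
    (Λ : ∀ w, U →L[ℂ] V w)
    (C Cinv : U →L[ℂ] U)
    (hCinv : C.comp Cinv = ContinuousLinearMap.id ℂ U ∧ Cinv.comp C = ContinuousLinearMap.id ℂ U)
    (hCsa : ∀ x y : U, (inner A (C x) y : A) = inner A x (C y)) :
    ((∀ A₀ B₀ : Aˣ,
        (∀ x : U,
          (A₀ : A) * (inner A x x : A) * star (A₀ : A) ≤ ∫ w, (inner A (Λ w x) (Λ w x) : A) ∂μ ∧
          (∫ w, (inner A (Λ w x) (Λ w x) : A) ∂μ) ≤ (B₀ : A) * (inner A x x : A) * star (B₀ : A)) →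
        ∀ x : U,
          (‖Cinv‖⁻¹ • (A₀ : A)) * (inner A x x : A) * star (‖Cinv‖⁻¹ • (A₀ : A)) ≤
            (∫ w, (inner A (Λ w (C x)) (Λ w (C x)) : A) ∂μ) ∧
          (∫ w, (inner A (Λ w (C x)) (Λ w (C x)) : A) ∂μ) ≤
            (‖C‖ • (B₀ : A)) * (inner A x x : A) * star (‖C‖ • (B₀ : A))) ∧
     (∀ A₀ B₀ : Aˣ,
        (∀ x : U,
          (A₀ : A) * (inner A x x : A) * star (A₀ : A) ≤
            (∫ w, (inner A (Λ w (C x)) (Λ w (C x)) : A) ∂μ) ∧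
          (∫ w, (inner A (Λ w (C x)) (Λ w (C x)) : A) ∂μ) ≤
            (B₀ : A) * (inner A x x : A) * star (B₀ : A)) →
        ∀ x : U,
          (‖C‖⁻¹ • (A₀ : A)) * (inner A x x : A) * star (‖C‖⁻¹ • (A₀ : A)) ≤
            (∫ w, (inner A (Λ w x) (Λ w x) : A) ∂μ) ∧
          (∫ w, (inner A (Λ w x) (Λ w x) : A) ∂μ) ≤
            (‖Cinv‖ • (B₀ : A)) * (inner A x x : A) * star (‖Cinv‖ • (B₀ : A)))) := by
  have hCCinv : Function.LeftInverse C Cinv := fun z => DFunLike.congr_fun hCinv.1 z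
  have hCinvC : Function.LeftInverse Cinv C := fun z => DFunLike.congr_fun hCinv.2 z
  have hC : CStarModuleOld.IsSymmetric A C := hCsa
  have hC' : CStarModuleOld.IsSymmetric A Cinv := hC.of_leftInverse hCCinv
  refine ⟨fun A₀ B₀ h x => ?_, fun A₀ B₀ h x => ?_⟩
  · exact ⟨(hC'.smul_conjugate_inner_self_le (hCinvC x) _).trans (h (C x)).1,
      (h (C x)).2.trans (hC.conjugate_inner_map_self_le x _)⟩
  · have hx := h (Cinv x)
    rw [hCCinv x] at hx
    exact ⟨(hC.smul_conjugate_inner_self_le (hCCinv x) _).trans hx.1,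
      hx.2.trans (hC'.conjugate_inner_map_self_le x _)⟩

theorem stmt7 {A : Type*} [CStarAlgebra A] [PartialOrder A] [StarOrderedRing A]
    {U : Type*} [NormedAddCommGroup U] [NormedSpace ℂ U] [SMul Aᵐᵒᵖ U] [CStarModuleOld A U]
    {Ω : Type*} [MeasurableSpace Ω] (μ : Measure Ω)
    {V : Ω → Type*} [∀ w, NormedAddCommGroup (V w)] [∀ w, NormedSpace ℂ (V w)]
    [∀ w, SMul Aᵐᵒᵖ (V w)] [∀ w, CStarModuleOld A (V w)]
    (Λ : ∀ w, U →L[ℂ] V w)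
    (C Cinv : U →L[ℂ] U)
    (hCinv : C.comp Cinv = ContinuousLinearMap.id ℂ U ∧ Cinv.comp C = ContinuousLinearMap.id ℂ U)
    (hCsa : ∀ x y : U, (inner A (C x) y : A) = inner A x (C y))
    (hCpos : ∀ x : U, (0 : A) ≤ inner A (C x) x) :
    ((∀ A₀ B₀ : Aˣ,
        (∀ x : U,
          (A₀ : A) * (inner A x x : A) * star (A₀ : A) ≤ ∫ w, (inner A (Λ w x) (Λ w x) : A) ∂μ ∧
          (∫ w, (inner A (Λ w x) (Λ w x) : A) ∂μ) ≤ (B₀ : A) * (inner A x x : A) * star (B₀ : A)) →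
        ∀ x : U,
          (‖Cinv‖⁻¹ • (A₀ : A)) * (inner A x x : A) * star (‖Cinv‖⁻¹ • (A₀ : A)) ≤
            (∫ w, (inner A (Λ w (C x)) (Λ w (C x)) : A) ∂μ) ∧
          (∫ w, (inner A (Λ w (C x)) (Λ w (C x)) : A) ∂μ) ≤
            (‖C‖ • (B₀ : A)) * (inner A x x : A) * star (‖C‖ • (B₀ : A))) ∧
     (∀ A₀ B₀ : Aˣ,
        (∀ x : U,
          (A₀ : A) * (inner A x x : A) * star (A₀ : A) ≤
            (∫ w, (inner A (Λ w (C x)) (Λ w (C x)) : A) ∂μ) ∧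
          (∫ w, (inner A (Λ w (C x)) (Λ w (C x)) : A) ∂μ) ≤
            (B₀ : A) * (inner A x x : A) * star (B₀ : A)) →
        ∀ x : U,
          (‖C‖⁻¹ • (A₀ : A)) * (inner A x x : A) * star (‖C‖⁻¹ • (A₀ : A)) ≤
            (∫ w, (inner A (Λ w x) (Λ w x) : A) ∂μ) ∧
          (∫ w, (inner A (Λ w x) (Λ w x) : A) ∂μ) ≤
            (‖Cinv‖ • (B₀ : A)) * (inner A x x : A) * star (‖Cinv‖ • (B₀ : A)))) :=
  stmt7_general μ Λ C Cinv hCinv hCsa
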